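/- Let f : ℝ → ℝ be a C^1 circle lift. Suppose f has a fixed point (there exists x with f x = x) and f has no hyperbolic fixed point (for every x, f x = x implies deriv f x = 1). Then (1/n) · sup_{x ∈ [0,1]} |log(deriv (f^[n]) x)| tends to 0 as n → ∞. -/

import Mathlib

/-!
By the chain rule, `log (f^[n])' x = ∑_{i<n} g (f^[i] x)` with `g = log f'`, a continuous
1-periodic function vanishing at every fixed point. Given `ε > 0`, the points where `|g| ≥ ε`
are moved by `f` by at least some `c > 0`, by compactness and periodicity. The orbit of `x` is
monotone and is trapped between two consecutive lifts of a fixed point, so it travels a total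
distance at most 1 and spends at most `1 / c` steps where `|g| ≥ ε`. Hence
`|log (f^[n])' x| ≤ sup |g| / c + ε n` uniformly in `x`.
-/

open Filter Topology Function Finset Real

theorem Finset.card_filter_mul_le_sum {ι : Type*} {s : Finset ι} {P : ι → Prop}
    [DecidablePred P] {a : ι → ℝ} {c : ℝ} (ha : ∀ i ∈ s, 0 ≤ a i)
    (hP : ∀ i ∈ s, P i → c ≤ a i) : #(s.filter P) * c ≤ ∑ i ∈ s, a i :=
  calc #(s.filter P) * c ≤ ∑ i ∈ s.filter P, a i := by
        simpa using card_nsmul_le_sum _ _ c fun i hi =>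
          hP i (mem_filter.1 hi).1 (mem_filter.1 hi).2
    _ ≤ ∑ i ∈ s, a i :=
        sum_le_sum_of_subset_of_nonneg (filter_subset P s) fun i hi _ => ha i hi

theorem Finset.sum_le_mul_card_filter_add {ι : Type*} {s : Finset ι} {b : ι → ℝ} {M ε : ℝ}
    (hε : 0 ≤ ε) (hM : ∀ i ∈ s, b i ≤ M) :
    ∑ i ∈ s, b i ≤ M * #(s.filter (ε ≤ b ·)) + ε * #s := by
  rw [← sum_filter_add_sum_filter_not s (ε ≤ b ·)]
  have hlarge : ∑ i ∈ s.filter (ε ≤ b ·), b i ≤ #(s.filter (ε ≤ b ·)) * M := by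
    simpa using sum_le_card_nsmul _ _ M fun i hi => hM i (mem_filter.1 hi).1
  have hsmall : ∑ i ∈ s.filter (¬ε ≤ b ·), b i ≤ #(s.filter (¬ε ≤ b ·)) * ε := by
    simpa using sum_le_card_nsmul _ _ ε fun i hi => (not_le.1 (mem_filter.1 hi).2).le
  have hcard : (#(s.filter (¬ε ≤ b ·)) : ℝ) ≤ #s := by exact_mod_cast card_filter_le s _
  nlinarith

theorem Monotone.sum_abs_iterate_succ_sub {α : Type*} [AddCommGroup α] [LinearOrder α]
    [IsOrderedAddMonoid α] {f : α → α} (hf : Monotone f) (n : ℕ) (x : α) :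
    ∑ i ∈ range n, |f^[i + 1] x - f^[i] x| = |f^[n] x - x| := by
  have htel : ∑ i ∈ range n, (f^[i + 1] x - f^[i] x) = f^[n] x - x :=
    sum_range_sub (fun i => f^[i] x) n
  rcases le_total x (f x) with h | h
  · have hu := hf.monotone_iterate_of_le_map h
    rw [← htel, abs_sum_of_nonneg fun i _ => sub_nonneg.2 (hu i.le_succ)]
    exact sum_congr rfl fun i _ => abs_of_nonneg (sub_nonneg.2 (hu i.le_succ))
  · have hu := hf.antitone_iterate_of_map_le h
    rw [← htel, ← abs_neg, ← sum_neg_distrib,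
      abs_sum_of_nonneg fun i _ => neg_nonneg.2 (sub_nonpos.2 (hu i.le_succ))]
    exact sum_congr rfl fun i _ => abs_of_nonpos (sub_nonpos.2 (hu i.le_succ))

theorem Function.Periodic.exists_pos_le_abs {φ ψ : ℝ → ℝ} {T ε : ℝ} (hT : 0 < T)
    (hφ : Continuous φ) (hψ : Continuous ψ) (hφT : Periodic φ T) (hψT : Periodic ψ T)
    (hzero : ∀ y, ψ y = 0 → |φ y| < ε) :
    ∃ c > 0, ∀ y, ε ≤ |φ y| → c ≤ |ψ y| := by
  have hK : IsCompact (Set.Icc 0 T ∩ {y | ε ≤ |φ y|}) :=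
    isCompact_Icc.inter_right (isClosed_le continuous_const hφ.abs)
  obtain ⟨c, hc, hcK⟩ := hK.exists_forall_le' hψ.abs.continuousOn (a := 0) fun y hy =>
    abs_pos.2 fun h0 => (hzero y h0).not_ge hy.2
  refine ⟨c, hc, fun y hy => ?_⟩
  obtain ⟨y', hy', hyy'⟩ := (show Periodic (fun y => (φ y, ψ y)) T from
    fun y => by simp only [hφT y, hψT y]).exists_mem_Ico₀ hT y
  obtain ⟨hφy, hψy⟩ := Prod.mk_inj.1 hyy'
  rw [hψy]
  exact hcK y' ⟨Set.Ico_subset_Icc_self hy', show ε ≤ |φ y'| by rwa [← hφy]⟩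

theorem deriv_iterate_eq_prod {f : ℝ → ℝ} (hf : Differentiable ℝ f) (n : ℕ) (x : ℝ) :
    deriv f^[n] x = ∏ i ∈ range n, deriv f (f^[i] x) := by
  induction n with
  | zero => simp
  | succ n ih =>
    rw [iterate_succ', deriv_comp x (hf _) ((hf.iterate n) x), prod_range_succ, ih, mul_comm]

section CircleLift

variable {f : ℝ → ℝ}

theorem periodic_sub_self_of_lift (hlift : ∀ x, f (x + 1) = f x + 1) :
    Periodic (fun x => f x - x) 1 :=
  fun x => by simp only [hlift]; ring

theorem periodic_deriv_of_lift (hlift : ∀ x, f (x + 1) = f x + 1) : Periodic (deriv f) 1 :=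
  fun x => by simpa [funext hlift] using (deriv_comp_add_const f 1 x).symm

theorem exists_isFixedPt_le_le_add_one (hlift : ∀ x, f (x + 1) = f x + 1) {p : ℝ}
    (hp : IsFixedPt f p) (x : ℝ) : ∃ q, IsFixedPt f q ∧ q ≤ x ∧ x ≤ q + 1 := by
  refine ⟨p + ⌊x - p⌋, ?_, by linarith [Int.floor_le (x - p)],
    by linarith [Int.lt_floor_add_one (x - p)]⟩
  have := (periodic_sub_self_of_lift hlift).int_mul ⌊x - p⌋ p
  simp only [mul_one, sub_eq_iff_eq_add] at this
  rw [IsFixedPt, this, hp.eq]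
  ring

theorem abs_iterate_sub_le_one (hmono : Monotone f) (hlift : ∀ x, f (x + 1) = f x + 1)
    {p : ℝ} (hp : IsFixedPt f p) (n : ℕ) (x : ℝ) : |f^[n] x - x| ≤ 1 := by
  obtain ⟨q, hq, hqx, hxq⟩ := exists_isFixedPt_le_le_add_one hlift hp x
  have hq1 : IsFixedPt f (q + 1) := by rw [IsFixedPt, hlift, hq.eq]
  have hlo : q ≤ f^[n] x := (hq.iterate n).eq ▸ hmono.iterate n hqx
  have hhi : f^[n] x ≤ q + 1 := (hq1.iterate n).eq ▸ hmono.iterate n hxq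
  rw [abs_le]
  constructor <;> linarith

theorem abs_log_deriv_iterate_le (hf : ContDiff ℝ 1 f) (hlift : ∀ x, f (x + 1) = f x + 1)
    (hpos : ∀ x, 0 < deriv f x) (hfix : ∃ p, IsFixedPt f p)
    (hnohyp : ∀ x, IsFixedPt f x → deriv f x = 1) {ε : ℝ} (hε : 0 < ε) :
    ∃ C, ∀ n x, |log (deriv f^[n] x)| ≤ C + ε * n := by
  obtain ⟨p, hp⟩ := hfix
  have hmono : Monotone f := (strictMono_of_deriv_pos hpos).monotone
  set g : ℝ → ℝ := fun y => log (deriv f y) with hg_def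
  have hg : Continuous g := (hf.continuous_deriv le_rfl).log fun x => (hpos x).ne'
  have hgT : Periodic g 1 := (periodic_deriv_of_lift hlift).comp log
  obtain ⟨M, hM⟩ : ∃ M, ∀ y, |g y| ≤ M := by
    obtain ⟨M, hM⟩ :=
      isBounded_iff_forall_norm_le.1 (hgT.isBounded_of_continuous one_ne_zero hg)
    exact ⟨M, fun y => hM _ (Set.mem_range_self y)⟩
  have hM0 : 0 ≤ M := (abs_nonneg _).trans (hM 0)
  obtain ⟨c, hc, hcg⟩ := hgT.exists_pos_le_abs (ψ := fun y => f y - y) one_pos hg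
    (hf.continuous.sub continuous_id) (periodic_sub_self_of_lift hlift) fun y hy => by
      simpa [hg_def, hnohyp y (sub_eq_zero.1 hy)] using hε
  refine ⟨M / c, fun n x => ?_⟩
  set bad := (range n).filter fun i => ε ≤ |g (f^[i] x)|
  have hbad : #bad * c ≤ 1 :=
    calc #bad * c ≤ ∑ i ∈ range n, |f^[i + 1] x - f^[i] x| :=
          card_filter_mul_le_sum (fun _ _ => abs_nonneg _) fun i _ hi => by
            simpa only [iterate_succ_apply'] using hcg _ hi
      _ = |f^[n] x - x| := hmono.sum_abs_iterate_succ_sub n x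
      _ ≤ 1 := abs_iterate_sub_le_one hmono hlift hp n x
  calc |log (deriv f^[n] x)| = |∑ i ∈ range n, g (f^[i] x)| := by
        rw [deriv_iterate_eq_prod (hf.differentiable one_ne_zero),
          log_prod fun i _ => (hpos _).ne']
    _ ≤ ∑ i ∈ range n, |g (f^[i] x)| := abs_sum_le_sum_abs _ _
    _ ≤ M * #bad + ε * #(range n) := sum_le_mul_card_filter_add hε.le fun i _ => hM _
    _ ≤ M / c + ε * n := by
        have : M * #bad ≤ M / c := by rw [le_div_iff₀ hc]; nlinarith
        rw [card_range]
        linarith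

end CircleLift

theorem tendsto_one_div_mul_of_le_const_add_mul {a : ℕ → ℝ} (ha : ∀ n, 0 ≤ a n)
    (h : ∀ ε > 0, ∃ C, ∀ n, a n ≤ C + ε * n) :
    Tendsto (fun n : ℕ => 1 / (n : ℝ) * a n) atTop (𝓝 0) := by
  refine tendsto_order.2 ⟨fun b hb => Eventually.of_forall fun n =>
    hb.trans_le (mul_nonneg (by positivity) (ha n)), fun b hb => ?_⟩
  obtain ⟨C, hC⟩ := h (b / 2) (half_pos hb)
  filter_upwards [(tendsto_const_div_atTop_nhds_zero_nat C).eventually (gt_mem_nhds (half_pos hb)),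
    eventually_gt_atTop 0] with n hCn hn
  calc 1 / (n : ℝ) * a n ≤ 1 / n * (C + b / 2 * n) := by gcongr; exact hC n
    _ = C / n + b / 2 := by field_simp
    _ < b := by linarith

/-- Case II of Theorem 1: a circle diffeomorphism with rotation number 0 and no
hyperbolic fixed point is C¹-distorted. -/
theorem c1_distorted_of_no_hyperbolic_fixed_point
    (f : ℝ → ℝ) (hf : ContDiff ℝ 1 f)
    (hlift : ∀ x : ℝ, f (x + 1) = f x + 1)
    (hpos : ∀ x : ℝ, 0 < deriv f x)
    (hfix : ∃ x : ℝ, f x = x)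
    (hnohyp : ∀ x : ℝ, f x = x → deriv f x = 1) :
    Filter.Tendsto
      (fun n : ℕ => (1 / (n : ℝ)) * ⨆ x : Set.Icc (0:ℝ) 1, |Real.log (deriv (f^[n]) x)|)
      Filter.atTop (𝓝 0) := by
  refine tendsto_one_div_mul_of_le_const_add_mul (fun n => iSup_nonneg fun _ => abs_nonneg _)
    fun ε hε => ?_
  obtain ⟨C, hC⟩ := abs_log_deriv_iterate_le hf hlift hpos hfix hnohyp hε
  have : Nonempty (Set.Icc (0 : ℝ) 1) := ⟨⟨0, by norm_num⟩⟩
  exact ⟨C, fun n => ciSup_le fun x => hC n x⟩
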